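/- arXiv:0706.3320 — 2 statements merged into one kernel-verified Lean document; each statement's English description precedes it below -/
import Mathlib

section
/- Let φⱼ, φₖ : ℝ → ℝ be C¹ phases with derivatives Ωⱼ, Ωₖ bounded above by M > 0, with φⱼ(0) = φₖ(0) = 0, and let τⱼⁿ, τₖⁿ denote the unique times with φⱼ(τⱼⁿ) = 2πn and φₖ(τₖⁿ) = 2πn. Suppose the return-time gaps are uniformly bounded: |τᵢⁿ⁺¹ − τᵢⁿ| ≤ Λ for i ∈ {j,k} and all n. If there is a constant κ such that |τⱼⁿ − τₖⁿ| ≤ κ for all n, then for all t ≥ 0, |φⱼ(t) − φₖ(t)| ≤ Mκ + 2ΛM. -/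
/-!
Choose `n` with `τₖⁿ ≤ t < τₖⁿ⁺¹` (possible since `τₖ⁰ = 0`, `φₖ` being injective, and
`τₖⁿ → ∞`). Both phases equal `2πn` at their `n`-th event, and `t` lies within `Λ` of `τₖⁿ` and
within `Λ + κ` of `τⱼⁿ`. Since both phases are `M`-Lipschitz, `|φⱼ t - φₖ t| ≤ M (Λ + κ) + M Λ`.
-/

open Real Filter

lemma abs_sub_le_mul_abs_sub_of_hasDerivAt {φ Ω : ℝ → ℝ} {M : ℝ}
    (hd : ∀ t, HasDerivAt φ (Ω t) t) (hb : ∀ t, |Ω t| ≤ M) (a b : ℝ) :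
    |φ b - φ a| ≤ M * |b - a| := by
  simpa only [Real.norm_eq_abs] using
    convex_univ.norm_image_sub_le_of_norm_hasDerivWithin_le
      (fun x _ => (hd x).hasDerivWithinAt) (fun x _ => hb x) (Set.mem_univ a) (Set.mem_univ b)

lemma abs_sub_le_of_eq_at {φ ψ Ω Ψ : ℝ → ℝ} {M : ℝ}
    (hφ : ∀ t, HasDerivAt φ (Ω t) t) (hψ : ∀ t, HasDerivAt ψ (Ψ t) t)
    (hΩ : ∀ t, |Ω t| ≤ M) (hΨ : ∀ t, |Ψ t| ≤ M) {s r : ℝ} (h : φ s = ψ r) (t : ℝ) :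
    |φ t - ψ t| ≤ M * |t - s| + M * |t - r| := by
  calc |φ t - ψ t| = |(φ t - φ s) + (ψ r - ψ t)| := by rw [h]; ring_nf
    _ ≤ |φ t - φ s| + |ψ r - ψ t| := abs_add_le _ _
    _ ≤ M * |t - s| + M * |r - t| :=
        add_le_add (abs_sub_le_mul_abs_sub_of_hasDerivAt hφ hΩ _ _)
          (abs_sub_le_mul_abs_sub_of_hasDerivAt hψ hΨ _ _)
    _ = M * |t - s| + M * |t - r| := by rw [abs_sub_comm r]

lemma exists_le_lt_succ_of_tendsto_atTop {α : Type*} [LinearOrder α] [NoMaxOrder α] {τ : ℕ → α}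
    (hτ : Tendsto τ atTop atTop) {t : α} (ht : τ 0 ≤ t) : ∃ n, τ n ≤ t ∧ t < τ (n + 1) := by
  have hex : ∃ n, t < τ n := (hτ.eventually_gt_atTop t).exists
  obtain ⟨n, hn⟩ := Nat.exists_eq_succ_of_ne_zero fun h : Nat.find hex = 0 =>
    ht.not_gt (h ▸ Nat.find_spec hex)
  exact ⟨n, not_lt.mp (Nat.find_min hex (by omega)), by simpa [hn] using Nat.find_spec hex⟩

theorem bounded_event_times_imply_bounded_phase_difference_general
    (φj φk Ωj Ωk : ℝ → ℝ) (M Λ κ : ℝ)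
    (τj τk : ℕ → ℝ)
    (hdj : ∀ t, HasDerivAt φj (Ωj t) t)
    (hdk : ∀ t, HasDerivAt φk (Ωk t) t)
    (hM : 0 < M)
    (hΩj : ∀ t, 0 < Ωj t ∧ Ωj t ≤ M)
    (hΩk : ∀ t, 0 < Ωk t ∧ Ωk t ≤ M)
    (hφk0 : φk 0 = 0)
    (hτj : ∀ n : ℕ, φj (τj n) = 2 * π * n)
    (hτk : ∀ n : ℕ, φk (τk n) = 2 * π * n)
    (hτktop : Filter.Tendsto τk Filter.atTop Filter.atTop)
    (hgapk : ∀ n : ℕ, |τk (n + 1) - τk n| ≤ Λ)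
    (hκ : ∀ n : ℕ, |τj n - τk n| ≤ κ) :
    ∀ t : ℝ, 0 ≤ t → |φj t - φk t| ≤ M * κ + 2 * Λ * M := by
  intro t ht
  have hbj : ∀ s, |Ωj s| ≤ M := fun s => abs_le.mpr ⟨by linarith [hΩj s], (hΩj s).2⟩
  have hbk : ∀ s, |Ωk s| ≤ M := fun s => abs_le.mpr ⟨by linarith [hΩk s], (hΩk s).2⟩
  have hτk00 : τk 0 = 0 :=
    (strictMono_of_hasDerivAt_pos hdk fun s => (hΩk s).1).injective (by simp [hτk, hφk0])
  obtain ⟨n, hle, hlt⟩ := exists_le_lt_succ_of_tendsto_atTop hτktop (hτk00 ▸ ht)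
  have hk : |t - τk n| ≤ Λ := by
    rw [abs_of_nonneg (sub_nonneg.mpr hle)]
    linarith [le_abs_self (τk (n + 1) - τk n), hgapk n]
  have hj : |t - τj n| ≤ Λ + κ := by
    linarith [abs_sub_le t (τk n) (τj n), abs_sub_comm (τk n) (τj n), hκ n]
  calc |φj t - φk t| ≤ M * |t - τj n| + M * |t - τk n| :=
        abs_sub_le_of_eq_at hdj hdk hbj hbk (by rw [hτj, hτk]) t
    _ ≤ M * (Λ + κ) + M * Λ := by gcongr
    _ = M * κ + 2 * Λ * M := by ring

theorem bounded_event_times_imply_bounded_phase_difference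
    (φj φk Ωj Ωk : ℝ → ℝ) (M Λ κ : ℝ)
    (τj τk : ℕ → ℝ)
    (hdj : ∀ t, HasDerivAt φj (Ωj t) t)
    (hdk : ∀ t, HasDerivAt φk (Ωk t) t)
    (hM : 0 < M)
    (hΩj : ∀ t, 0 < Ωj t ∧ Ωj t ≤ M)
    (hΩk : ∀ t, 0 < Ωk t ∧ Ωk t ≤ M)
    (hφj0 : φj 0 = 0) (hφk0 : φk 0 = 0)
    (hτj0 : 0 ≤ τj 0) (hτk0 : 0 ≤ τk 0)
    (hτj : ∀ n : ℕ, φj (τj n) = 2 * π * n)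
    (hτk : ∀ n : ℕ, φk (τk n) = 2 * π * n)
    (hτjtop : Filter.Tendsto τj Filter.atTop Filter.atTop)
    (hτktop : Filter.Tendsto τk Filter.atTop Filter.atTop)
    (hgapj : ∀ n : ℕ, |τj (n + 1) - τj n| ≤ Λ)
    (hgapk : ∀ n : ℕ, |τk (n + 1) - τk n| ≤ Λ)
    (hκ : ∀ n : ℕ, |τj n - τk n| ≤ κ) :
    ∀ t : ℝ, 0 ≤ t → |φj t - φk t| ≤ M * κ + 2 * Λ * M :=
  bounded_event_times_imply_bounded_phase_difference_general φj φk Ωj Ωk M Λ κ τj τk hdj hdk hM hΩj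
    hΩk hφk0 hτj hτk hτktop hgapk hκ
end

section
/- Let φⱼ, φₖ : ℝ → ℝ be C¹ phases with 0 < c ≤ φᵢ'(t) ≤ M, and τᵢⁿ the times with φᵢ(τᵢⁿ) = 2πn. Suppose the average periods agree: limₙ τⱼⁿ/n = limₙ τₖⁿ/n = T, and additionally |τᵢⁿ − nT| ≤ κᵢ for all n and i ∈ {j,k}. Then |τⱼⁿ − τₖⁿ| ≤ κⱼ + κₖ for all n, and consequently sup_t |φⱼ(t) − φₖ(t)| < ∞. -/
open Real

/-!
Each phase advances at speed between `c` and `M`, so it is `M`-Lipschitz and its inverse is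
`1/c`-Lipschitz. At time `t ≥ 0` phase `j` has completed `n = ⌊φⱼ t / 2π⌋` cycles, so `t` lies
within `2π/c` of the crossing time `τⱼⁿ`, hence within `2π/c + κⱼ + κₖ` of `τₖⁿ`. Both phases
equal `2πn` at their `n`-th crossing, so the Lipschitz bound controls `|φⱼ t - φₖ t|`.
-/

section DerivBounds

variable {f f' : ℝ → ℝ}

theorem abs_image_sub_le_of_abs_hasDerivAt_le (hf : ∀ t, HasDerivAt f (f' t) t) {M : ℝ}
    (hM : ∀ t, |f' t| ≤ M) (x y : ℝ) : |f y - f x| ≤ M * |y - x| := by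
  simpa using Convex.norm_image_sub_le_of_norm_hasDerivWithin_le
    (fun t _ => (hf t).hasDerivWithinAt) (fun t _ => hM t) convex_univ
    (Set.mem_univ x) (Set.mem_univ y)

theorem mul_abs_sub_le_abs_image_sub_of_le_hasDerivAt (hf : ∀ t, HasDerivAt f (f' t) t)
    {c : ℝ} (hc : ∀ t, c ≤ f' t) (x y : ℝ) : c * |y - x| ≤ |f y - f x| := by
  have hdiff : Differentiable ℝ f := fun t => (hf t).differentiableAt
  have hderiv : ∀ t, c ≤ deriv f t := fun t => (hf t).deriv ▸ hc t
  rcases le_total x y with hxy | hyx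
  · rw [abs_of_nonneg (sub_nonneg.2 hxy)]
    exact (mul_sub_le_image_sub_of_le_deriv hdiff hderiv hxy).trans (le_abs_self _)
  · rw [abs_sub_comm, abs_sub_comm (f y), abs_of_nonneg (sub_nonneg.2 hyx)]
    exact (mul_sub_le_image_sub_of_le_deriv hdiff hderiv hyx).trans (le_abs_self _)

theorem exists_abs_sub_crossing_le (hf : ∀ t, HasDerivAt f (f' t) t) {c p : ℝ} (hc : 0 < c)
    (hp : 0 < p) (hf' : ∀ t, c ≤ f' t)
    {τ : ℕ → ℝ} (hτ : ∀ n : ℕ, f (τ n) = p * n) {t : ℝ} (ht : 0 ≤ f t) :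
    ∃ n : ℕ, |t - τ n| ≤ p / c := by
  refine ⟨⌊f t / p⌋₊, ?_⟩
  have hlow := (le_div_iff₀ hp).1 (Nat.floor_le (div_nonneg ht hp.le))
  have hup := (div_lt_iff₀ hp).1 (Nat.lt_floor_add_one (f t / p))
  rw [le_div_iff₀ hc, mul_comm]
  calc c * |t - τ ⌊f t / p⌋₊| ≤ |f t - f (τ ⌊f t / p⌋₊)| :=
        mul_abs_sub_le_abs_image_sub_of_le_hasDerivAt hf hf' _ _
    _ ≤ p := by rw [hτ, abs_le]; constructor <;> linarith

end DerivBounds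

theorem equal_mean_periods_bounded_fluctuations_imply_PS_general
    (φj φk Ωj Ωk : ℝ → ℝ) (c M T κj κk : ℝ)
    (τj τk : ℕ → ℝ)
    (hdj : ∀ t, HasDerivAt φj (Ωj t) t)
    (hdk : ∀ t, HasDerivAt φk (Ωk t) t)
    (hc : 0 < c)
    (hΩj : ∀ t, c ≤ Ωj t ∧ Ωj t ≤ M)
    (hΩk : ∀ t, c ≤ Ωk t ∧ Ωk t ≤ M)
    (hφj0 : φj 0 = 0)
    (hτj : ∀ n : ℕ, φj (τj n) = 2 * π * n)
    (hτk : ∀ n : ℕ, φk (τk n) = 2 * π * n)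
    (hκj : ∀ n : ℕ, |τj n - n * T| ≤ κj)
    (hκk : ∀ n : ℕ, |τk n - n * T| ≤ κk) :
    (∀ n : ℕ, |τj n - τk n| ≤ κj + κk) ∧
      ∃ C : ℝ, ∀ t : ℝ, 0 ≤ t → |φj t - φk t| ≤ C := by
  have hsync : ∀ n : ℕ, |τj n - τk n| ≤ κj + κk := fun n =>
    (abs_sub_le _ _ _).trans (add_le_add (hκj n) (abs_sub_comm (n * T) _ ▸ hκk n))
  have habs : ∀ {Ω : ℝ → ℝ}, (∀ t, c ≤ Ω t ∧ Ω t ≤ M) → ∀ t, |Ω t| ≤ M := fun hΩ t =>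
    abs_le.2 ⟨by linarith [hΩ t], (hΩ t).2⟩
  refine ⟨hsync, M * (2 * π / c) + M * (2 * π / c + (κj + κk)), fun t ht => ?_⟩
  have hφjt : 0 ≤ φj t := hφj0 ▸ monotone_of_deriv_nonneg (fun s => (hdj s).differentiableAt)
    (fun s => (hdj s).deriv ▸ hc.le.trans (hΩj s).1) ht
  obtain ⟨n, hn⟩ := exists_abs_sub_crossing_le hdj hc two_pi_pos (fun s => (hΩj s).1) hτj hφjt
  have hnk : |t - τk n| ≤ 2 * π / c + (κj + κk) :=
    (abs_sub_le _ _ _).trans (add_le_add hn (hsync n))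
  calc |φj t - φk t| = |(φj t - φj (τj n)) - (φk t - φk (τk n))| := by rw [hτj, hτk]; ring_nf
    _ ≤ |φj t - φj (τj n)| + |φk t - φk (τk n)| := abs_sub _ _
    _ ≤ M * |t - τj n| + M * |t - τk n| :=
        add_le_add (abs_image_sub_le_of_abs_hasDerivAt_le hdj (habs hΩj) _ _)
          (abs_image_sub_le_of_abs_hasDerivAt_le hdk (habs hΩk) _ _)
    _ ≤ M * (2 * π / c) + M * (2 * π / c + (κj + κk)) := by
        have hM : 0 ≤ M := hc.le.trans ((hΩj 0).1.trans (hΩj 0).2)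
        gcongr

theorem equal_mean_periods_bounded_fluctuations_imply_PS
    (φj φk Ωj Ωk : ℝ → ℝ) (c M T κj κk : ℝ)
    (τj τk : ℕ → ℝ)
    (hdj : ∀ t, HasDerivAt φj (Ωj t) t)
    (hdk : ∀ t, HasDerivAt φk (Ωk t) t)
    (hc : 0 < c)
    (hΩj : ∀ t, c ≤ Ωj t ∧ Ωj t ≤ M)
    (hΩk : ∀ t, c ≤ Ωk t ∧ Ωk t ≤ M)
    (hφj0 : φj 0 = 0) (hφk0 : φk 0 = 0)
    (hτj0 : ∀ n : ℕ, 0 ≤ τj n) (hτk0 : ∀ n : ℕ, 0 ≤ τk n)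
    (hτj : ∀ n : ℕ, φj (τj n) = 2 * π * n)
    (hτk : ∀ n : ℕ, φk (τk n) = 2 * π * n)
    (hTj : Filter.Tendsto (fun n : ℕ => τj n / n) Filter.atTop (nhds T))
    (hTk : Filter.Tendsto (fun n : ℕ => τk n / n) Filter.atTop (nhds T))
    (hκj : ∀ n : ℕ, |τj n - n * T| ≤ κj)
    (hκk : ∀ n : ℕ, |τk n - n * T| ≤ κk) :
    (∀ n : ℕ, |τj n - τk n| ≤ κj + κk) ∧
      ∃ C : ℝ, ∀ t : ℝ, 0 ≤ t → |φj t - φk t| ≤ C :=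
  equal_mean_periods_bounded_fluctuations_imply_PS_general φj φk Ωj Ωk c M T κj κk τj τk hdj hdk hc
    hΩj hΩk hφj0 hτj hτk hκj hκk
end
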